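/- arXiv:2505.10547 — 5 statements merged into one kernel-verified Lean document; each statement's English description precedes it below -/
import Mathlib

section
/- Let E be a real inner product space, let o, a, c ∈ E, and let r, R ≥ 0 be real numbers. If ‖a − o‖ ≥ R, ‖c − o‖ ≥ R, and (‖a − c‖/2)² + r² ≤ R², then every point on the closed segment from a to c is at distance at least r from o; that is, for every t ∈ [0,1], ‖((1 − t) • a + t • c) − o‖ ≥ r. -/
/-!
Put `u = a - o` and `v = c - o`. Expanding the square gives the identity
`‖(1 - t) u + t v‖² = (1 - t) ‖u‖² + t ‖v‖² - t (1 - t) ‖u - v‖²`,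
in which the convex combination of `‖u‖²` and `‖v‖²` is at least `R²`, while
`t (1 - t) ≤ 1/4`. Hence every point of the segment has squared distance at least
`R² - (‖a - c‖ / 2)² ≥ r²` from `o`.
-/

section

variable {E : Type*} [NormedAddCommGroup E] [InnerProductSpace ℝ E]

theorem norm_one_sub_smul_add_smul_sub_sq (o a c : E) (t : ℝ) :
    ‖(1 - t) • a + t • c - o‖ ^ 2 =
      (1 - t) * ‖a - o‖ ^ 2 + t * ‖c - o‖ ^ 2 - t * (1 - t) * ‖a - c‖ ^ 2 := by
  have hcomb : (1 - t) • a + t • c - o = (1 - t) • (a - o) + t • (c - o) := by module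
  have hdiff : a - c = (a - o) - (c - o) := by abel
  rw [hcomb, hdiff, norm_add_sq_real, norm_sub_sq_real (a - o), norm_smul, norm_smul,
    real_inner_smul_left, real_inner_smul_right, mul_pow, mul_pow, Real.norm_eq_abs,
    Real.norm_eq_abs, sq_abs, sq_abs]
  ring

theorem sq_sub_half_norm_sub_sq_le_norm_one_sub_smul_add_smul_sub_sq
    {o a c : E} {R t : ℝ} (hR : 0 ≤ R) (ha : R ≤ ‖a - o‖) (hc : R ≤ ‖c - o‖)
    (ht : t ∈ Set.Icc (0 : ℝ) 1) :
    R ^ 2 - (‖a - c‖ / 2) ^ 2 ≤ ‖(1 - t) • a + t • c - o‖ ^ 2 := by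
  obtain ⟨ht₀, ht₁⟩ := ht
  have ha2 : R ^ 2 ≤ ‖a - o‖ ^ 2 := pow_le_pow_left₀ hR ha 2
  have hc2 : R ^ 2 ≤ ‖c - o‖ ^ 2 := pow_le_pow_left₀ hR hc 2
  have hweights : t * (1 - t) ≤ 1 / 4 := by nlinarith [sq_nonneg (1 - 2 * t)]
  rw [norm_one_sub_smul_add_smul_sub_sq]
  linarith [mul_le_mul_of_nonneg_left ha2 (sub_nonneg.2 ht₁),
    mul_le_mul_of_nonneg_left hc2 ht₀,
    mul_le_mul_of_nonneg_right hweights (sq_nonneg ‖a - c‖)]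

end

theorem segment_dist_ge_of_endpoints_far_general
    {E : Type*} [NormedAddCommGroup E] [InnerProductSpace ℝ E]
    (o a c : E) (r R : ℝ) (hR : 0 ≤ R)
    (ha : R ≤ ‖a - o‖) (hc : R ≤ ‖c - o‖)
    (hstep : (‖a - c‖ / 2) ^ 2 + r ^ 2 ≤ R ^ 2) :
    ∀ t : ℝ, t ∈ Set.Icc (0 : ℝ) 1 → r ≤ ‖((1 - t) • a + t • c) - o‖ := by
  intro t ht
  have hsq := sq_sub_half_norm_sub_sq_le_norm_one_sub_smul_add_smul_sub_sq hR ha hc ht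
  exact le_of_sq_le_sq (by linarith) (norm_nonneg _)

/-- If two points `a` and `c` both keep distance at least `R` from a center `o`,
and `(‖a - c‖ / 2)² + r² ≤ R²`, then every point on the closed segment from `a`
to `c` keeps distance at least `r` from `o`. -/
theorem segment_dist_ge_of_endpoints_far
    {E : Type*} [NormedAddCommGroup E] [InnerProductSpace ℝ E]
    (o a c : E) (r R : ℝ) (hr : 0 ≤ r) (hR : 0 ≤ R)
    (ha : R ≤ ‖a - o‖) (hc : R ≤ ‖c - o‖)
    (hstep : (‖a - c‖ / 2) ^ 2 + r ^ 2 ≤ R ^ 2) :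
    ∀ t : ℝ, t ∈ Set.Icc (0 : ℝ) 1 → r ≤ ‖((1 - t) • a + t • c) - o‖ :=
  segment_dist_ge_of_endpoints_far_general o a c r R hR ha hc hstep
end

section
/- Let E be a real inner product space, let o, a, c ∈ E, let l ≥ 0 and 0 < η < η' be real numbers. If ‖a − o‖ ≥ l + η', ‖c − o‖ ≥ l + η', and ‖a − c‖ < 2·√((η' − η)² + 2·(l + η)·(η' − η)), then every point on the closed segment from a to c is at distance strictly greater than l + η from o; that is, for every t ∈ [0,1], ‖((1 − t) • a + t • c) − o‖ > l + η. -/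
/-! For `s + t = 1` expanding inner products gives
`‖s • x + t • y‖² = s ‖x‖² + t ‖y‖² - s t ‖x - y‖²`, and `s t ≤ 1/4`. With `x = a - o`,
`y = c - o` this bounds the squared distance from `o` of every point of the segment below by
`(l + η')² - ‖a - c‖² / 4`, which the step-size bound makes larger than `(l + η)²`. -/

section InnerProductSpace

variable {E : Type*} [NormedAddCommGroup E] [InnerProductSpace ℝ E]

theorem norm_smul_add_smul_sq_of_add_eq_one (x y : E) {s t : ℝ} (hst : s + t = 1) :
    ‖s • x + t • y‖ ^ 2 = s * ‖x‖ ^ 2 + t * ‖y‖ ^ 2 - s * t * ‖x - y‖ ^ 2 := by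
  rw [norm_add_sq_real, norm_sub_sq_real, norm_smul, norm_smul, real_inner_smul_left,
    real_inner_smul_right, mul_pow, mul_pow, Real.norm_eq_abs, Real.norm_eq_abs, sq_abs, sq_abs]
  obtain rfl := eq_sub_of_add_eq hst
  ring

theorem lt_norm_smul_add_smul_of_norm_sub_sq_lt {x y : E} {r ρ s t : ℝ} (hρ : 0 ≤ ρ)
    (hx : ρ ≤ ‖x‖) (hy : ρ ≤ ‖y‖) (hxy : ‖x - y‖ ^ 2 < 4 * (ρ ^ 2 - r ^ 2))
    (hs : 0 ≤ s) (ht : 0 ≤ t) (hst : s + t = 1) :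
    r < ‖s • x + t • y‖ := by
  have hx2 : ρ ^ 2 ≤ ‖x‖ ^ 2 := pow_le_pow_left₀ hρ hx 2
  have hy2 : ρ ^ 2 ≤ ‖y‖ ^ 2 := pow_le_pow_left₀ hρ hy 2
  have hst4 : s * t ≤ 1 / 4 := by nlinarith [sq_nonneg (s - t)]
  have hsq : r ^ 2 < ‖s • x + t • y‖ ^ 2 := by
    rw [norm_smul_add_smul_sq_of_add_eq_one x y hst]
    nlinarith [mul_nonneg hs ht, sq_nonneg ‖x - y‖]
  exact (le_abs_self r).trans_lt (abs_lt_of_sq_lt_sq hsq (norm_nonneg _))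

end InnerProductSpace

/-- If two consecutive waypoints `a` and `c` both keep distance at least `l + η'`
from a center `o`, and `‖a - c‖ < 2·√((η' − η)² + 2·(l + η)·(η' − η))`, then every
point on the closed segment from `a` to `c` is at distance strictly greater than
`l + η` from `o`. -/
theorem segment_dist_gt_of_step_small
    {E : Type*} [NormedAddCommGroup E] [InnerProductSpace ℝ E]
    (o a c : E) (l η η' : ℝ) (hl : 0 ≤ l) (hη : 0 < η) (hηη' : η < η')
    (ha : l + η' ≤ ‖a - o‖) (hc : l + η' ≤ ‖c - o‖)
    (hstep : ‖a - c‖ < 2 * Real.sqrt ((η' - η) ^ 2 + 2 * (l + η) * (η' - η))) :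
    ∀ t : ℝ, t ∈ Set.Icc (0 : ℝ) 1 → l + η < ‖((1 - t) • a + t • c) - o‖ := by
  rintro t ⟨ht0, ht1⟩
  have hstep_sq : ‖(a - o) - (c - o)‖ ^ 2 < 4 * ((l + η') ^ 2 - (l + η) ^ 2) := by
    have h : (‖a - c‖ / 2) ^ 2 < (η' - η) ^ 2 + 2 * (l + η) * (η' - η) :=
      (Real.lt_sqrt (by positivity)).1 (by linarith)
    rw [sub_sub_sub_cancel_right]
    linear_combination 4 * h
  have hsegment : (1 - t) • a + t • c - o = (1 - t) • (a - o) + t • (c - o) := by module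
  rw [hsegment]
  exact lt_norm_smul_add_smul_of_norm_sub_sq_lt (by linarith) ha hc hstep_sq
    (sub_nonneg.2 ht1) ht0 (sub_add_cancel 1 t)
end

section
/- Let E be a real inner product space, let o, a, c ∈ E, let l ≥ 0 and 0 < η < η' be real numbers. Suppose ‖a − o‖ ≥ l + η', ‖c − o‖ ≥ l + η', and ‖a − c‖ < 2·√((η' − η)² + 2·(l + η)·(η' − η)). Then every point within distance η of the closed segment from a to c stays strictly farther than l from o; that is, for every x ∈ E and every t ∈ [0,1], if ‖x − ((1 − t) • a + t • c)‖ ≤ η then ‖x − o‖ > l. -/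
/-! The planner's margin `η' - η` is chosen so that `(l + η')² - (l + η)²` is exactly the radicand
in the step bound. Centering at `o`, the squared norm of a point on the segment is the convex
combination of the endpoints' squared norms minus `t (1 - t) ‖a - c‖²`, hence at least
`(l + η')² - ‖a - c‖² / 4 > (l + η)²`. The segment therefore avoids the ball of radius `l + η`,
and a point within `η` of it avoids the ball of radius `l`. -/

open Set

section Segment

variable {E : Type*} [NormedAddCommGroup E] [InnerProductSpace ℝ E]

theorem norm_one_sub_smul_add_smul_sq (u v : E) (t : ℝ) :
    ‖(1 - t) • u + t • v‖ ^ 2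
      = (1 - t) * ‖u‖ ^ 2 + t * ‖v‖ ^ 2 - t * (1 - t) * ‖u - v‖ ^ 2 := by
  rw [norm_add_sq_real, norm_sub_sq_real, norm_smul, norm_smul, real_inner_smul_left,
    real_inner_smul_right, mul_pow, mul_pow, Real.norm_eq_abs, Real.norm_eq_abs, sq_abs, sq_abs]
  ring

theorem lt_norm_one_sub_smul_add_smul {u v : E} {r s t : ℝ} (hr : 0 ≤ r)
    (hu : r ≤ ‖u‖) (hv : r ≤ ‖v‖) (huv : ‖u - v‖ ^ 2 < 4 * (r ^ 2 - s ^ 2))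
    (ht : t ∈ Icc (0 : ℝ) 1) : s < ‖(1 - t) • u + t • v‖ := by
  obtain ⟨ht₀, ht₁⟩ := ht
  have hu2 : r ^ 2 ≤ ‖u‖ ^ 2 := pow_le_pow_left₀ hr hu 2
  have hv2 : r ^ 2 ≤ ‖v‖ ^ 2 := pow_le_pow_left₀ hr hv 2
  have hquarter : t * (1 - t) ≤ 1 / 4 := by nlinarith [sq_nonneg (2 * t - 1)]
  have hsq : s ^ 2 < ‖(1 - t) • u + t • v‖ ^ 2 := by
    rw [norm_one_sub_smul_add_smul_sq]
    nlinarith [mul_le_mul_of_nonneg_right hquarter (sq_nonneg ‖u - v‖),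
      mul_le_mul_of_nonneg_left hu2 (sub_nonneg.2 ht₁), mul_le_mul_of_nonneg_left hv2 ht₀]
  exact lt_of_abs_lt (abs_lt_of_sq_lt_sq hsq (norm_nonneg _))

end Segment

/-- If two consecutive waypoints `a` and `c` both keep distance at least `l + η'`
from a center `o`, and `‖a - c‖ < 2·√((η' − η)² + 2·(l + η)·(η' − η))`, then every
point within distance `η` of the closed segment from `a` to `c` stays strictly
farther than `l` from `o`. -/
theorem tracked_segment_dist_gt
    {E : Type*} [NormedAddCommGroup E] [InnerProductSpace ℝ E]
    (o a c : E) (l η η' : ℝ) (hl : 0 ≤ l) (hη : 0 < η) (hηη' : η < η')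
    (ha : l + η' ≤ ‖a - o‖) (hc : l + η' ≤ ‖c - o‖)
    (hstep : ‖a - c‖ < 2 * Real.sqrt ((η' - η) ^ 2 + 2 * (l + η) * (η' - η))) :
    ∀ x : E, ∀ t : ℝ, t ∈ Set.Icc (0 : ℝ) 1 →
      ‖x - ((1 - t) • a + t • c)‖ ≤ η → l < ‖x - o‖ := by
  intro x t ht hx
  have hstep_sq : ‖(a - o) - (c - o)‖ ^ 2 < 4 * ((l + η') ^ 2 - (l + η) ^ 2) := by
    have h := (Real.lt_sqrt (by positivity)).1 ((div_lt_iff₀' two_pos).2 hstep)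
    rw [sub_sub_sub_cancel_right]
    linear_combination 4 * h
  have hseg : l + η < ‖(1 - t) • a + t • c - o‖ := by
    have h := lt_norm_one_sub_smul_add_smul (by linarith) ha hc hstep_sq ht
    rwa [show (1 - t) • (a - o) + t • (c - o) = (1 - t) • a + t • c - o by module] at h
  linarith [norm_sub_le_norm_sub_add_norm_sub ((1 - t) • a + t • c) x o,
    norm_sub_rev ((1 - t) • a + t • c) x]
end

section
/- Let E be a real inner product space, let k ≥ 1 and M ≥ 1 be natural numbers, let x̂_1, …, x̂_k ∈ E be waypoints, let o_1, …, o_M ∈ E be obstacle centers with clearance radii l_1, …, l_M ≥ 0, let 0 < η < η' be real numbers, and let Δx > 0. Suppose: (i) ‖x̂_{j+1} − x̂_j‖ ≤ Δx for every j ∈ {1, …, k−1}; (ii) ‖x̂_j − o_h‖ ≥ l_h + η' for every j ∈ {1, …, k} and every h ∈ {1, …, M}; and (iii) Δx < 2·√((η' − η)² + 2·(l_h + η)·(η' − η)) for every h ∈ {1, …, M}. Then every point within distance η of the polyline through x̂_1, …, x̂_k stays strictly farther than l_h from every obstacle center; that is, for every x ∈ E, every j ∈ {1, …, k−1}, and every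 t ∈ [0,1], if ‖x − ((1 − t) • x̂_j + t • x̂_{j+1})‖ ≤ η then ‖x − o_h‖ > l_h for all h ∈ {1, …, M}. -/
/-!
The planned point `p = (1 - t) • a + t • b` on a step `[a, b]` satisfies
`‖p - o‖² = (1 - t) ‖a - o‖² + t ‖b - o‖² - t (1 - t) ‖b - a‖²`, so if both waypoints are at
distance at least `r` from `o` then `‖p - o‖² ≥ r² - ‖b - a‖² / 4`. With `r = l + η'` and
`s = l + η`, the paper's radicand `(η' - η)² + 2 (l + η)(η' - η)` is exactly `r² - s²`, so the step
bound gives `‖p - o‖ > s`; the triangle inequality then keeps every point within `η` of `p`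
farther than `l` from `o`.
-/

open Set

section

variable {E : Type*} [NormedAddCommGroup E] [InnerProductSpace ℝ E]

theorem norm_smul_add_smul_sq (u v : E) (t : ℝ) :
    ‖(1 - t) • u + t • v‖ ^ 2
      = (1 - t) * ‖u‖ ^ 2 + t * ‖v‖ ^ 2 - t * (1 - t) * ‖v - u‖ ^ 2 := by
  rw [norm_add_sq_real, norm_sub_sq_real, norm_smul, norm_smul, real_inner_smul_left,
    real_inner_smul_right, real_inner_comm u v, mul_pow, mul_pow, Real.norm_eq_abs, Real.norm_eq_abs,
    sq_abs, sq_abs]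
  ring

theorem sq_sub_div_four_le_norm_segment_sub_sq {a b o : E} {r t : ℝ} (hr : 0 ≤ r)
    (ha : r ≤ ‖a - o‖) (hb : r ≤ ‖b - o‖) (ht : t ∈ Icc (0 : ℝ) 1) :
    r ^ 2 - ‖b - a‖ ^ 2 / 4 ≤ ‖(1 - t) • a + t • b - o‖ ^ 2 := by
  obtain ⟨ht0, ht1⟩ := ht
  have hsplit : (1 - t) • a + t • b - o = (1 - t) • (a - o) + t • (b - o) := by module
  have ha2 : r ^ 2 ≤ ‖a - o‖ ^ 2 := pow_le_pow_left₀ hr ha 2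
  have hb2 : r ^ 2 ≤ ‖b - o‖ ^ 2 := pow_le_pow_left₀ hr hb 2
  have ht4 : t * (1 - t) ≤ 1 / 4 := by nlinarith [sq_nonneg (2 * t - 1)]
  rw [hsplit, norm_smul_add_smul_sq, sub_sub_sub_cancel_right]
  nlinarith [mul_le_mul_of_nonneg_right ht4 (sq_nonneg ‖b - a‖)]

theorem lt_norm_segment_sub {a b o : E} {r s t : ℝ} (hsr : s < r)
    (ha : r ≤ ‖a - o‖) (hb : r ≤ ‖b - o‖) (hab : ‖b - a‖ < 2 * √(r ^ 2 - s ^ 2))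
    (ht : t ∈ Icc (0 : ℝ) 1) :
    s < ‖(1 - t) • a + t • b - o‖ := by
  rcases lt_or_ge s 0 with hs | hs
  · exact hs.trans_le (norm_nonneg _)
  have hab2 : ‖b - a‖ ^ 2 / 4 < r ^ 2 - s ^ 2 := by
    have := (Real.lt_sqrt (by positivity)).1 (show ‖b - a‖ / 2 < √(r ^ 2 - s ^ 2) by linarith)
    linarith
  refine lt_of_pow_lt_pow_left₀ 2 (norm_nonneg _) ?_
  linarith [sq_sub_div_four_le_norm_segment_sub_sq (hs.trans hsr.le) ha hb ht]

end

theorem tracked_polyline_avoids_all_obstacles_general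
    {E : Type*} [NormedAddCommGroup E] [InnerProductSpace ℝ E]
    (k M : ℕ)
    (xh : Fin k → E) (o : Fin M → E) (l : Fin M → ℝ)
    (η η' Δx : ℝ) (hηη' : η < η')
    (hstep : ∀ (j : ℕ) (hj : j + 1 < k),
      ‖xh ⟨j + 1, hj⟩ - xh ⟨j, Nat.lt_of_succ_lt hj⟩‖ ≤ Δx)
    (hclear : ∀ (j : Fin k) (h : Fin M), l h + η' ≤ ‖xh j - o h‖)
    (hbound : ∀ h : Fin M,
      Δx < 2 * Real.sqrt ((η' - η) ^ 2 + 2 * (l h + η) * (η' - η))) :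
    ∀ (x : E) (j : ℕ) (hj : j + 1 < k) (t : ℝ), t ∈ Set.Icc (0 : ℝ) 1 →
      ‖x - ((1 - t) • xh ⟨j, Nat.lt_of_succ_lt hj⟩ + t • xh ⟨j + 1, hj⟩)‖ ≤ η →
      ∀ h : Fin M, l h < ‖x - o h‖ := by
  intro x j hj t ht hx h
  have hstep_lt : ‖xh ⟨j + 1, hj⟩ - xh ⟨j, Nat.lt_of_succ_lt hj⟩‖
      < 2 * √((l h + η') ^ 2 - (l h + η) ^ 2) := by
    rw [show (l h + η') ^ 2 - (l h + η) ^ 2 = (η' - η) ^ 2 + 2 * (l h + η) * (η' - η) by ring]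
    exact (hstep j hj).trans_lt (hbound h)
  have hplanned := lt_norm_segment_sub (by linarith : l h + η < l h + η') (hclear _ h)
    (hclear _ h) hstep_lt ht
  have htri := norm_sub_le_norm_sub_add_norm_sub
    ((1 - t) • xh ⟨j, Nat.lt_of_succ_lt hj⟩ + t • xh ⟨j + 1, hj⟩) x (o h)
  rw [norm_sub_rev _ x] at htri
  linarith

/-- Safety half of the paper's Theorem: a planned polyline whose waypoints keep
the inflated clearance `l h + η'` from every obstacle center, with step size `Δx`
bounded by the paper's bound, yields that every point within tracking error `η`
of the polyline stays strictly farther than `l h` from every obstacle center. -/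
theorem tracked_polyline_avoids_all_obstacles
    {E : Type*} [NormedAddCommGroup E] [InnerProductSpace ℝ E]
    (k M : ℕ) (hk : 1 ≤ k) (hM : 1 ≤ M)
    (xh : Fin k → E) (o : Fin M → E) (l : Fin M → ℝ) (hl : ∀ h, 0 ≤ l h)
    (η η' Δx : ℝ) (hη : 0 < η) (hηη' : η < η') (hΔx : 0 < Δx)
    (hstep : ∀ (j : ℕ) (hj : j + 1 < k),
      ‖xh ⟨j + 1, hj⟩ - xh ⟨j, Nat.lt_of_succ_lt hj⟩‖ ≤ Δx)
    (hclear : ∀ (j : Fin k) (h : Fin M), l h + η' ≤ ‖xh j - o h‖)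
    (hbound : ∀ h : Fin M,
      Δx < 2 * Real.sqrt ((η' - η) ^ 2 + 2 * (l h + η) * (η' - η))) :
    ∀ (x : E) (j : ℕ) (hj : j + 1 < k) (t : ℝ), t ∈ Set.Icc (0 : ℝ) 1 →
      ‖x - ((1 - t) • xh ⟨j, Nat.lt_of_succ_lt hj⟩ + t • xh ⟨j + 1, hj⟩)‖ ≤ η →
      ∀ h : Fin M, l h < ‖x - o h‖ :=
  tracked_polyline_avoids_all_obstacles_general k M xh o l η η' Δx hηη' hstep hclear hbound
end

section
/- Let N ≥ 1 be a natural number, let s : Fin N → ℝ be a finite family of real scores, let α ∈ (0,1) be a real number, let m := ⌈(1 − α)·N⌉, and let Δ := sup{δ ∈ ℝ : the number of indices i with s i ≥ δ is at least m}. Then the number of indices i with s i < Δ is at most α·N; that is, the fraction of calibration scores falling strictly below the calibrated threshold is at most α. -/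
/-!
Let `S` be the set of admissible thresholds, whose supremum is `Δ`. The sets
`{j | δ ≤ s j}` shrink as `δ` grows, and only finitely many scores lie below `Δ`, so some
`δ ∈ S` exceeds all of them; then `{j | δ ≤ s j} ⊆ {j | Δ ≤ s j}`,
so `Δ` is itself admissible: at least `⌈(1 − α)·N⌉ ≥ (1 − α)·N` scores are `≥ Δ`, and at
most `α·N` remain below it.
-/

theorem exists_mem_forall_lt_of_forall_lt_csSup {α : Type*} [ConditionallyCompleteLinearOrder α]
    {S F : Set α} (hS : S.Nonempty) (hF : F.Finite) (h : ∀ x ∈ F, x < sSup S) :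
    ∃ δ ∈ S, ∀ x ∈ F, x < δ := by
  rcases F.eq_empty_or_nonempty with rfl | hFne
  · obtain ⟨δ, hδ⟩ := hS
    exact ⟨δ, hδ, by simp⟩
  · obtain ⟨δ, hδ, hlt⟩ := exists_lt_of_lt_csSup hS (h _ (hFne.csSup_mem hF))
    exact ⟨δ, hδ, fun x hx => (le_csSup hF.bddAbove hx).trans_lt hlt⟩

section Calibration

variable {ι : Type*} [Finite ι] (s : ι → ℝ) (m : ℕ)

def admissibleThresholds : Set ℝ :=
  {δ | m ≤ {j | δ ≤ s j}.ncard}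

variable {s m}

theorem admissibleThresholds_nonempty (hm : m ≤ Nat.card ι) :
    (admissibleThresholds s m).Nonempty := by
  obtain ⟨b, hb⟩ := (Set.finite_range s).bddBelow
  refine ⟨b, ?_⟩
  have huniv : {j | b ≤ s j} = Set.univ :=
    Set.eq_univ_of_forall fun j => hb ⟨j, rfl⟩
  simpa only [admissibleThresholds, Set.mem_ofPred_eq, huniv, Set.ncard_univ] using hm

theorem sSup_mem_admissibleThresholds (hm : m ≤ Nat.card ι) :
    sSup (admissibleThresholds s m) ∈ admissibleThresholds s m := by
  set Δ := sSup (admissibleThresholds s m)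
  obtain ⟨δ, hδ, hbelow⟩ := exists_mem_forall_lt_of_forall_lt_csSup
    (admissibleThresholds_nonempty hm) (Set.toFinite (s '' {j | s j < Δ}))
    (by rintro _ ⟨j, hj, rfl⟩; exact hj)
  have hsub : {j | δ ≤ s j} ⊆ {j | Δ ≤ s j} := fun j (hj : δ ≤ s j) =>
    show Δ ≤ s j from not_lt.mp fun hlt => (hbelow _ ⟨j, hlt, rfl⟩).not_ge hj
  exact hδ.trans (Set.ncard_le_ncard hsub)

theorem ncard_lt_sSup_admissibleThresholds_add_le (hm : m ≤ Nat.card ι) :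
    {i | s i < sSup (admissibleThresholds s m)}.ncard + m ≤ Nat.card ι := by
  have hcompl : {i | s i < sSup (admissibleThresholds s m)} =
      {j | sSup (admissibleThresholds s m) ≤ s j}ᶜ := by
    ext i
    simp
  rw [hcompl, ← Set.ncard_add_ncard_compl {j | sSup (admissibleThresholds s m) ≤ s j},
    add_comm]
  exact Nat.add_le_add_right (sSup_mem_admissibleThresholds hm) _

end Calibration

theorem calibration_false_positive_rate_le_alpha_general
    (N : ℕ) (s : Fin N → ℝ) (α : ℝ) (hα : α ∈ Set.Ioo (0 : ℝ) 1) :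
    ({i : Fin N | s i <
        sSup {δ : ℝ | ⌈(1 - α) * N⌉₊ ≤ {j : Fin N | δ ≤ s j}.ncard}}.ncard : ℝ)
      ≤ α * N := by
  have hmN : ⌈(1 - α) * N⌉₊ ≤ Nat.card (Fin N) := by
    rw [Nat.card_fin, Nat.ceil_le]
    nlinarith [hα.1, (N.cast_nonneg : (0 : ℝ) ≤ N)]
  have hcount : ({i : Fin N | s i < sSup (admissibleThresholds s ⌈(1 - α) * N⌉₊)}.ncard : ℝ)
      + ⌈(1 - α) * N⌉₊ ≤ N := by
    exact_mod_cast Nat.card_fin N ▸ ncard_lt_sSup_admissibleThresholds_add_le hmN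
  have hceil : (1 - α) * N ≤ ⌈(1 - α) * N⌉₊ := Nat.le_ceil _
  change ({i : Fin N | s i < sSup (admissibleThresholds s ⌈(1 - α) * N⌉₊)}.ncard : ℝ) ≤ α * N
  linarith

/-- With `m = ⌈(1 − α)·N⌉` and `Δ = sup{δ : |{i : s i ≥ δ}| ≥ m}`, at most an
`α` fraction of the calibration scores fall strictly below `Δ`. -/
theorem calibration_false_positive_rate_le_alpha
    (N : ℕ) (hN : 1 ≤ N) (s : Fin N → ℝ) (α : ℝ) (hα : α ∈ Set.Ioo (0 : ℝ) 1) :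
    ({i : Fin N | s i <
        sSup {δ : ℝ | ⌈(1 - α) * N⌉₊ ≤ {j : Fin N | δ ≤ s j}.ncard}}.ncard : ℝ)
      ≤ α * N :=
  calibration_false_positive_rate_le_alpha_general N s α hα
end
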